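/- Let N ≥ 1 and let x : Fin N → ℝ be the loss values of a random variable under N equally likely scenarios (each of probability 1/N), and let k be an integer with 1 ≤ k ≤ N. Then the Conditional Value-at-Risk of x at confidence level α = 1 − k/N, defined by the Rockafellar–Uryasev formula CVaR_α(x) = inf over η ∈ ℝ of ( η + (1/k) · Σ_{s} max(x s − η, 0) ) (note 1/(N(1−α)) = 1/k), equals the subset-based expression (1/k) · max over all subsets S̄ of Fin N with |S̄| = k of Σ_{s ∈ S̄} x s. -/

import Mathlib

/-!
For every `η` and every `k`-element set `S`, `∑_{s ∈ S} x s ≤ k η + ∑_s max (x s - η) 0`, so each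
value of the Rockafellar–Uryasev objective bounds the subset average from above. Equality holds
when `η` separates `S` from its complement (`x ≥ η` on `S`, `x ≤ η` off `S`); a sum-maximising
`S` is separated by `η = min_{s ∈ S} x s`, since otherwise exchanging the minimiser for a larger
outside value would increase the sum. Hence the infimum is attained and equals the maximum.
-/

open Finset

section
variable {ι : Type*} (x : ι → ℝ)

theorem exists_separates_of_forall_card_eq_sum_le [DecidableEq ι] {S : Finset ι}
    (hS : S.Nonempty) (hmax : ∀ T : Finset ι, #T = #S → ∑ s ∈ T, x s ≤ ∑ s ∈ S, x s) :
    ∃ η, (∀ s ∈ S, η ≤ x s) ∧ ∀ s ∉ S, x s ≤ η := by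
  obtain ⟨t, htS, hmin⟩ := S.exists_mem_eq_inf' hS x
  refine ⟨x t, fun s hs => hmin ▸ inf'_le x hs, fun s hs => ?_⟩
  have hs' : s ∉ S.erase t := fun h => hs (mem_of_mem_erase h)
  have hswap := hmax (insert s (S.erase t))
    (by rw [card_insert_of_notMem hs', card_erase_add_one htS])
  rw [sum_insert hs', sum_erase_eq_sub htS] at hswap
  linarith

variable [Fintype ι]

theorem sum_le_card_mul_add_sum_max_sub_zero (S : Finset ι) (η : ℝ) :
    ∑ s ∈ S, x s ≤ #S * η + ∑ s, max (x s - η) 0 := by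
  have h : ∑ s ∈ S, (x s - η) ≤ ∑ s, max (x s - η) 0 :=
    calc ∑ s ∈ S, (x s - η) ≤ ∑ s ∈ S, max (x s - η) 0 :=
          sum_le_sum fun s _ => le_max_left _ _
      _ ≤ ∑ s, max (x s - η) 0 :=
          sum_le_sum_of_subset_of_nonneg (subset_univ S) fun s _ _ => le_max_right _ _
  rw [sum_sub_distrib, sum_const, nsmul_eq_mul] at h
  linarith

theorem sum_max_sub_zero_eq_of_separates {S : Finset ι} {η : ℝ}
    (hin : ∀ s ∈ S, η ≤ x s) (hout : ∀ s ∉ S, x s ≤ η) :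
    ∑ s, max (x s - η) 0 = ∑ s ∈ S, x s - #S * η := by
  rw [← sum_subset (subset_univ S) fun s _ hs => max_eq_right (sub_nonpos.2 (hout s hs)),
    sum_congr rfl fun s hs => max_eq_left (sub_nonneg.2 (hin s hs)), sum_sub_distrib, sum_const,
    nsmul_eq_mul]

theorem iInf_add_mul_sum_max_sub_zero_eq [DecidableEq ι] {S : Finset ι} (hS : S.Nonempty)
    (hmax : ∀ T : Finset ι, #T = #S → ∑ s ∈ T, x s ≤ ∑ s ∈ S, x s) :
    ⨅ η : ℝ, (η + (1 / (#S : ℝ)) * ∑ s, max (x s - η) 0) = (1 / (#S : ℝ)) * ∑ s ∈ S, x s := by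
  have hk : (0 : ℝ) < #S := by exact_mod_cast hS.card_pos
  obtain ⟨η, hin, hout⟩ := exists_separates_of_forall_card_eq_sum_le x hS hmax
  have hleast : IsLeast (Set.range fun e : ℝ => e + (1 / (#S : ℝ)) * ∑ s, max (x s - e) 0)
      ((1 / (#S : ℝ)) * ∑ s ∈ S, x s) := by
    refine ⟨⟨η, ?_⟩, Set.forall_mem_range.2 fun e => ?_⟩
    · dsimp only
      rw [sum_max_sub_zero_eq_of_separates x hin hout]
      field_simp
      ring
    · calc (1 / (#S : ℝ)) * ∑ s ∈ S, x s
          ≤ (1 / (#S : ℝ)) * (#S * e + ∑ s, max (x s - e) 0) := by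
            gcongr; exact sum_le_card_mul_add_sum_max_sub_zero x S e
        _ = e + (1 / (#S : ℝ)) * ∑ s, max (x s - e) 0 := by field_simp
  exact hleast.isGLB.ciInf_eq

end

/-- **Subset-based representation of CVaR** (Fábián 2008).
For `N` equally likely scenarios with losses `x : Fin N → ℝ` and `1 ≤ k ≤ N`,
the CVaR at level `α = 1 - k/N`, given by the Rockafellar–Uryasev formula
`inf_η (η + (1/k) · Σ_s max (x s - η) 0)` (note `1/(N(1-α)) = 1/k`), equals
`(1/k) · max_{S̄ ⊆ Fin N, |S̄| = k} Σ_{s ∈ S̄} x s`. -/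
theorem cvar_eq_subset_based (N k : ℕ) (x : Fin N → ℝ)
    (hk1 : 1 ≤ k) (hkN : k ≤ N) :
    (⨅ η : ℝ, (η + (1 / (k : ℝ)) * ∑ s, max (x s - η) 0)) =
      (1 / (k : ℝ)) *
        ((Finset.univ : Finset (Fin N)).powersetCard k).sup'
          (Finset.powersetCard_nonempty.mpr (by simpa using hkN))
          (fun S => ∑ s ∈ S, x s) := by
  obtain ⟨S, hSk, hSmax⟩ := (univ.powersetCard k).exists_mem_eq_sup'
    (powersetCard_nonempty.2 (by simpa using hkN)) (fun S => ∑ s ∈ S, x s)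
  have hcard : #S = k := (mem_powersetCard.1 hSk).2
  rw [hSmax, ← hcard]
  refine iInf_add_mul_sum_max_sub_zero_eq x (card_pos.1 (by omega)) fun T hT => ?_
  rw [← hSmax]
  exact le_sup' (fun S => ∑ s ∈ S, x s) (mem_powersetCard.2 ⟨subset_univ T, hT.trans hcard⟩)
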